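/- Let K be a field of characteristic 2. Then the ℤ-graded identities of U_1 admit no finite basis: there is no finite subset S ⊆ L such that T_ℤ(U_1) = ⟨S⟩_{T_ℤ}. -/

import Mathlib

open FreeLieAlgebra LaurentPolynomial

/-- The free Lie algebra `L` over `K` on the generators `x_i^a`, `(a, i) : ℤ × ℕ`;
the generator `x_i^a := FreeLieAlgebra.of K (a, i)` has ℤ-degree `a`. -/
abbrev FL (K : Type*) [Field K] := FreeLieAlgebra K (ℤ × ℕ)

variable (K : Type*) [Field K]

/-- Iterated Lie brackets of generators whose ℤ-degrees sum to `a`. -/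
inductive IsHomBracket : FL K → ℤ → Prop
  | gen (a : ℤ) (i : ℕ) : IsHomBracket (FreeLieAlgebra.of K (a, i)) a
  | bracket {u v : FL K} {a b : ℤ} :
      IsHomBracket u a → IsHomBracket v b → IsHomBracket ⁅u, v⁆ (a + b)

/-- The homogeneous component `L_a` of the free Lie algebra. -/
noncomputable def homComp (a : ℤ) : Submodule K (FL K) :=
  Submodule.span K {w : FL K | IsHomBracket K w a}

/-- A graded endomorphism of the free Lie algebra. -/
def IsGradedEndo (φ : FL K →ₗ⁅K⁆ FL K) : Prop :=
  ∀ (a : ℤ) (i : ℕ), φ (FreeLieAlgebra.of K (a, i)) ∈ homComp K a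

/-- A `T_ℤ`-ideal: a Lie ideal stable under all graded endomorphisms. -/
def IsTIdeal (I : LieIdeal K (FL K)) : Prop :=
  ∀ φ : FL K →ₗ⁅K⁆ FL K, IsGradedEndo K φ → ∀ x ∈ I, φ x ∈ I

/-- `⟨S⟩_{T_ℤ}`, the smallest `T_ℤ`-ideal containing `S` (as a set of elements). -/
def TSpan (S : Set (FL K)) : Set (FL K) :=
  {x : FL K | ∀ I : LieIdeal K (FL K), IsTIdeal K I → S ⊆ (I : Set (FL K)) → x ∈ I}

/-- `U_1`, the Lie algebra of `K`-linear derivations of `K[t, t⁻¹]`. -/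
abbrev U1 (K : Type*) [Field K] := Derivation K (LaurentPolynomial K) (LaurentPolynomial K)

/-- Evaluation of a derivation of `K[t,t⁻¹]` at `t`, as a linear map. -/
noncomputable def evalT : U1 K →ₗ[K] LaurentPolynomial K where
  toFun D := D (T 1)
  map_add' D E := by simp
  map_smul' c D := by simp

/-- The homogeneous component `(U_1)_a = {D | D t ∈ K • t^{a+1}}` of the canonical
ℤ-grading of `U_1`. -/
noncomputable def U1comp (a : ℤ) : Submodule K (U1 K) :=
  (Submodule.span K ({T (a + 1)} : Set (LaurentPolynomial K))).comap (evalT K)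

/-- `T_ℤ(U_1)`, the set of ℤ-graded identities of `U_1`. -/
def TU1 : Set (FL K) :=
  {f : FL K | ∀ v : ℤ × ℕ → U1 K, (∀ (a : ℤ) (i : ℕ), v (a, i) ∈ U1comp K a) →
    FreeLieAlgebra.lift K v f = 0}

/-!
A finite set `S` of graded polynomials involves only finitely many generators, hence only
finitely many degrees. Choose `N` so large that none of them is `N`, `3N` or `4N`, and grade the
Heisenberg algebra of strictly upper triangular `3 × 3` matrices by putting `E₁₂, E₂₃, E₁₃` in
degrees `N, 3N, 4N` (all other components being zero). Every element of `S` is then a graded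
identity of this algebra, and graded identities form a `T_ℤ`-ideal, so `⟨S⟩_{T_ℤ}` consists of
graded identities of it. But `⁅x_0^N, x_1^{3N}⁆` is not one, as `⁅E₁₂, E₂₃⁆ = E₁₃`, whereas it is a
graded identity of `U_1` in characteristic two, because `⁅e_a, e_b⁆ = (b - a) e_{a+b}` there.
-/

namespace LaurentPolynomial

variable {R : Type*} [CommRing R]

theorem derivation_T (D : Derivation R R[T;T⁻¹] R[T;T⁻¹]) (n : ℤ) :
    D (T n) = (n : R[T;T⁻¹]) * T (n - 1) * D (T 1) := by
  induction n using Int.induction_on with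
  | zero => simp
  | succ k ih =>
    have hk : (T 1 : R[T;T⁻¹]) * T ((k : ℤ) - 1) = T k := by rw [← T_add]; ring_nf
    rw [T_add, Derivation.leibniz, ih, smul_eq_mul, smul_eq_mul, add_sub_cancel_right]
    push_cast
    linear_combination (k : R[T;T⁻¹]) * D (T 1) * hk
  | pred k ih =>
    have hk : (T (-(k : ℤ)) : R[T;T⁻¹]) = T (-k - 1) * T 1 := by rw [← T_add]; ring_nf
    have hk' : (T (-(k : ℤ) - 1) : R[T;T⁻¹]) = T 1 * T (-k - 1 - 1) := by rw [← T_add]; ring_nf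
    rw [hk, Derivation.leibniz, smul_eq_mul, smul_eq_mul] at ih
    apply (isUnit_T (1 : ℤ)).mul_left_cancel
    push_cast at ih ⊢
    linear_combination ih - (k + 1 : R[T;T⁻¹]) * D (T 1) * hk'

theorem derivation_ext {D E : Derivation R R[T;T⁻¹] R[T;T⁻¹]} (h : D (T 1) = E (T 1)) :
    D = E := by
  refine Derivation.ext fun p => ?_
  induction p using LaurentPolynomial.induction_on' with
  | add p q hp hq => rw [map_add, map_add, hp, hq]
  | C_mul_T n a =>
    rw [C_eq_algebraMap, Derivation.leibniz, Derivation.leibniz, Derivation.map_algebraMap,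
      Derivation.map_algebraMap, derivation_T D n, derivation_T E n, h]

theorem derivation_lie_apply_T_one {D E : Derivation R R[T;T⁻¹] R[T;T⁻¹]} {a b : ℤ} {c d : R}
    (hD : D (T 1) = c • T (a + 1)) (hE : E (T 1) = d • T (b + 1)) :
    ⁅D, E⁆ (T 1) = (((b - a : ℤ) : R) * c * d) • T (a + b + 1) := by
  rw [Derivation.commutator_apply, hD, hE, Derivation.map_smul, Derivation.map_smul,
    derivation_T D, derivation_T E, hD, hE, add_sub_cancel_right, add_sub_cancel_right]
  have h₁ : (T b : R[T;T⁻¹]) * T (a + 1) = T (a + b + 1) := by rw [← T_add]; ring_nf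
  have h₂ : (T a : R[T;T⁻¹]) * T (b + 1) = T (a + b + 1) := by rw [← T_add]; ring_nf
  simp only [Algebra.smul_def, map_mul, map_intCast]
  push_cast
  linear_combination (algebraMap R R[T;T⁻¹] c * algebraMap R R[T;T⁻¹] d) *
    ((b + 1 : R[T;T⁻¹]) * h₁ - (a + 1) * h₂)

end LaurentPolynomial

theorem lie_of_of_mem_TU1 {a b : ℤ} (hab : ((b - a : ℤ) : K) = 0) (i j : ℕ) :
    ⁅of K (a, i), of K (b, j)⁆ ∈ TU1 K := by
  intro v hv
  obtain ⟨c, hc⟩ := Submodule.mem_span_singleton.mp (hv a i)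
  obtain ⟨d, hd⟩ := Submodule.mem_span_singleton.mp (hv b j)
  rw [LieHom.map_lie, lift_of_apply, lift_of_apply]
  refine derivation_ext ?_
  rw [derivation_lie_apply_T_one hc.symm hd.symm, hab, zero_mul, zero_mul, zero_smul,
    Derivation.zero_apply]

namespace FreeLieAlgebra

variable {R X : Type*} [CommRing R]

theorem lieSpan_range_of :
    LieSubalgebra.lieSpan R (FreeLieAlgebra R X) (Set.range (of R)) = ⊤ := by
  set H := LieSubalgebra.lieSpan R (FreeLieAlgebra R X) (Set.range (of R))
  set f : FreeLieAlgebra R X →ₗ⁅R⁆ H :=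
    lift R fun x => ⟨of R x, LieSubalgebra.subset_lieSpan ⟨x, rfl⟩⟩
  have hf : H.incl.comp f = LieHom.id := hom_ext fun x => by simp [f]
  refine eq_top_iff.mpr fun s _ => ?_
  rw [← LieHom.id_apply (R := R) s, ← hf]
  exact (f s).property

theorem exists_finite_mem_lieSpan (s : FreeLieAlgebra R X) :
    ∃ Y : Set X, Y.Finite ∧ s ∈ LieSubalgebra.lieSpan R _ (of R '' Y) := by
  let H : LieSubalgebra R (FreeLieAlgebra R X) :=
    { carrier := {s | ∃ Y : Set X, Y.Finite ∧ s ∈ LieSubalgebra.lieSpan R _ (of R '' Y)}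
      zero_mem' := ⟨∅, Set.finite_empty, zero_mem _⟩
      add_mem' := by
        rintro s t ⟨Y, hY, hs⟩ ⟨Z, hZ, ht⟩
        refine ⟨Y ∪ Z, hY.union hZ, add_mem ?_ ?_⟩
        · exact LieSubalgebra.lieSpan_mono (Set.image_mono Set.subset_union_left) hs
        · exact LieSubalgebra.lieSpan_mono (Set.image_mono Set.subset_union_right) ht
      smul_mem' := by
        rintro c s ⟨Y, hY, hs⟩
        exact ⟨Y, hY, SMulMemClass.smul_mem c hs⟩
      lie_mem' := by
        rintro s t ⟨Y, hY, hs⟩ ⟨Z, hZ, ht⟩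
        refine ⟨Y ∪ Z, hY.union hZ, LieSubalgebra.lie_mem _ ?_ ?_⟩
        · exact LieSubalgebra.lieSpan_mono (Set.image_mono Set.subset_union_left) hs
        · exact LieSubalgebra.lieSpan_mono (Set.image_mono Set.subset_union_right) ht }
  have hH : LieSubalgebra.lieSpan R _ (Set.range (of R)) ≤ H := by
    refine LieSubalgebra.lieSpan_le.mpr ?_
    rintro _ ⟨x, rfl⟩
    exact ⟨{x}, Set.finite_singleton x, LieSubalgebra.subset_lieSpan ⟨x, rfl, rfl⟩⟩
  exact hH (by rw [lieSpan_range_of]; exact LieSubalgebra.mem_top s)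

theorem exists_finite_subset_lieSpan {S : Set (FreeLieAlgebra R X)} (hS : S.Finite) :
    ∃ Y : Set X, Y.Finite ∧ S ⊆ LieSubalgebra.lieSpan R _ (of R '' Y) := by
  choose Y hY hsY using exists_finite_mem_lieSpan (R := R) (X := X)
  refine ⟨⋃ s ∈ S, Y s, hS.biUnion fun s _ => hY s, fun s hs => ?_⟩
  exact LieSubalgebra.lieSpan_mono (Set.image_mono (Set.subset_biUnion_of_mem hs)) (hsY s)

theorem lift_eq_zero_of_mem_lieSpan {L : Type*} [LieRing L] [LieAlgebra R L] {f : X → L}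
    {Y : Set X} (hf : ∀ x ∈ Y, f x = 0) {s : FreeLieAlgebra R X}
    (hs : s ∈ LieSubalgebra.lieSpan R _ (of R '' Y)) : lift R f s = 0 := by
  have : LieSubalgebra.lieSpan R _ (of R '' Y) ≤ (lift R f).ker.toLieSubalgebra := by
    refine LieSubalgebra.lieSpan_le.mpr ?_
    rintro _ ⟨x, hx, rfl⟩
    simp [hf x hx]
  exact (lift R f).mem_ker.mp (this hs)

end FreeLieAlgebra

section GradedIdentities

variable {K} {A : Type*} [LieRing A] [LieAlgebra K A]

def gradedIdentities (U : ℤ → Submodule K A) : LieIdeal K (FL K) where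
  carrier := {f | ∀ v : ℤ × ℕ → A, (∀ (a : ℤ) (i : ℕ), v (a, i) ∈ U a) → lift K v f = 0}
  add_mem' hf hg v hv := by rw [map_add, hf v hv, hg v hv, add_zero]
  zero_mem' _ _ := map_zero _
  smul_mem' c f hf v hv := by rw [map_smul, hf v hv, smul_zero]
  lie_mem hf v hv := by rw [LieHom.map_lie, hf v hv, lie_zero]

variable {U : ℤ → Submodule K A}

theorem lift_mem_of_mem_homComp (hU : ∀ a b, ∀ x ∈ U a, ∀ y ∈ U b, ⁅x, y⁆ ∈ U (a + b))
    {v : ℤ × ℕ → A} (hv : ∀ (a : ℤ) (i : ℕ), v (a, i) ∈ U a) {a : ℤ} {f : FL K}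
    (hf : f ∈ homComp K a) : lift K v f ∈ U a := by
  induction hf using Submodule.span_induction with
  | mem g hg =>
    induction hg with
    | gen a i => rw [lift_of_apply]; exact hv a i
    | bracket _ _ ihu ihv => rw [LieHom.map_lie]; exact hU _ _ _ ihu _ ihv
  | zero => rw [map_zero]; exact zero_mem _
  | add g h _ _ ihg ihh => rw [map_add]; exact add_mem ihg ihh
  | smul c g _ ih => rw [map_smul]; exact Submodule.smul_mem _ c ih

theorem isTIdeal_gradedIdentities (hU : ∀ a b, ∀ x ∈ U a, ∀ y ∈ U b, ⁅x, y⁆ ∈ U (a + b)) :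
    IsTIdeal K (gradedIdentities U) := by
  intro φ hφ f hf v hv
  have hcomp : (lift K v).comp φ = lift K fun x => lift K v (φ (of K x)) :=
    hom_ext fun x => by rw [lift_of_apply]; rfl
  rw [← LieHom.comp_apply, hcomp]
  exact hf _ fun a i => lift_mem_of_mem_homComp hU hv (hφ a i)

theorem lieSpan_subset_gradedIdentities {Y : Set (ℤ × ℕ)} (hY : ∀ x ∈ Y, U x.1 = ⊥) :
    (LieSubalgebra.lieSpan K (FL K) (of K '' Y) : Set (FL K)) ⊆ gradedIdentities U :=
  fun _ hf _ hv => lift_eq_zero_of_mem_lieSpan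
    (fun x hx => (Submodule.mem_bot K).mp (hY x hx ▸ hv x.1 x.2)) hf

end GradedIdentities

section WeightGrading

attribute [local instance] LieRing.ofAssociativeRing

variable {K} {n : Type*} [DecidableEq n] [Preorder n]

def weightComp (w : n → ℤ) (a : ℤ) : Submodule K (Matrix n n K) :=
  Submodule.span K {x | ∃ i j, i < j ∧ w j - w i = a ∧ Matrix.single i j 1 = x}

variable {w : n → ℤ}

theorem single_mem_weightComp {i j : n} {a : ℤ} (hij : i < j) (ha : w j - w i = a) :
    Matrix.single i j (1 : K) ∈ weightComp w a :=
  Submodule.subset_span ⟨i, j, hij, ha, rfl⟩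

theorem weightComp_eq_bot {a : ℤ} (h : ∀ i j, i < j → w j - w i ≠ a) :
    weightComp (K := K) w a = ⊥ :=
  Submodule.span_eq_bot.mpr fun _ ⟨i, j, hij, hw, _⟩ => absurd hw (h i j hij)

variable [Fintype n]

theorem mul_mem_weightComp {a b : ℤ} {x y : Matrix n n K} (hx : x ∈ weightComp w a)
    (hy : y ∈ weightComp w b) : x * y ∈ weightComp w (a + b) := by
  have hxy := Submodule.mul_mem_mul hx hy
  rw [weightComp, weightComp, Submodule.span_mul_span] at hxy
  refine Submodule.span_le.mpr ?_ hxy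
  rintro _ ⟨_, ⟨i, j, hij, rfl, rfl⟩, _, ⟨k, l, hkl, rfl, rfl⟩, rfl⟩
  dsimp only
  by_cases hjk : j = k
  · subst hjk
    rw [Matrix.single_mul_single_same, one_mul]
    exact Submodule.subset_span ⟨i, l, hij.trans hkl, by ring, rfl⟩
  · rw [Matrix.single_mul_single_of_ne (h := hjk)]
    exact zero_mem _

theorem lie_mem_weightComp {a b : ℤ} {x y : Matrix n n K} (hx : x ∈ weightComp w a)
    (hy : y ∈ weightComp w b) : ⁅x, y⁆ ∈ weightComp w (a + b) := by
  rw [Ring.lie_def]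
  exact sub_mem (mul_mem_weightComp hx hy) (add_comm a b ▸ mul_mem_weightComp hy hx)

variable (K) in
theorem exists_isTIdeal_lie_notMem (p q : ℤ) :
    ∃ I : LieIdeal K (FL K), IsTIdeal K I ∧
      (LieSubalgebra.lieSpan K (FL K) (of K '' {x | x.1 ≠ p ∧ x.1 ≠ q ∧ x.1 ≠ p + q}) :
        Set (FL K)) ⊆ I ∧
      ⁅of K (p, 0), of K (q, 1)⁆ ∉ I := by
  set w : Fin 3 → ℤ := ![0, p, p + q]
  refine ⟨gradedIdentities (weightComp (K := K) w), isTIdeal_gradedIdentities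
    fun a b x hx y hy => lie_mem_weightComp hx hy, lieSpan_subset_gradedIdentities ?_, ?_⟩
  · rintro x ⟨hp, hq, hpq⟩
    refine weightComp_eq_bot fun i j hij => ?_
    fin_cases i <;> fin_cases j <;> simp_all [w] <;> omega
  · let v : ℤ × ℕ → Matrix (Fin 3) (Fin 3) K := fun x =>
      if x = (p, 0) then Matrix.single 0 1 1 else if x = (q, 1) then Matrix.single 1 2 1 else 0
    have hv : ∀ (a : ℤ) (i : ℕ), v (a, i) ∈ weightComp w a := by
      intro a i
      simp only [v]
      split_ifs with h₀ h₁
      · exact single_mem_weightComp (by decide) (by simp [w, (Prod.mk.inj h₀).1])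
      · exact single_mem_weightComp (by decide) (by simp [w, (Prod.mk.inj h₁).1])
      · exact zero_mem _
    intro hI
    have := hI v hv
    rw [LieHom.map_lie, lift_of_apply, lift_of_apply, Ring.lie_def] at this
    simpa [v, Matrix.single_mul_single_same] using congr_fun₂ this 0 2

end WeightGrading

/-- Corollary 4.7 (for `U_1`): over a field of characteristic two, the ℤ-graded identities
of `U_1` admit no finite basis. -/
theorem TU1_no_finite_basis [CharP K 2] :
    ¬ ∃ S : Set (FL K), S.Finite ∧ TU1 K = TSpan K S := by
  rintro ⟨S, hS, hTU1⟩
  obtain ⟨Y, hY, hSY⟩ := exists_finite_subset_lieSpan hS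
  obtain ⟨N, hN⟩ : ∃ N : ℤ, ∀ x ∈ Y, |x.1| < N := by
    obtain ⟨B, hB⟩ := (hY.image fun x => |x.1|).bddAbove
    exact ⟨B + 1, fun x hx => Int.lt_add_one_of_le (hB ⟨x, hx, rfl⟩)⟩
  have hYN : of K '' Y ⊆ of K '' {x | x.1 ≠ N ∧ x.1 ≠ 3 * N ∧ x.1 ≠ N + 3 * N} :=
    Set.image_mono fun x hx => by
      have := abs_lt.mp (hN x hx)
      exact ⟨by omega, by omega, by omega⟩
  obtain ⟨I, hI, hSI, hnotMem⟩ := exists_isTIdeal_lie_notMem K N (3 * N)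
  have hmem : ⁅of K (N, 0), of K (3 * N, 1)⁆ ∈ TU1 K := by
    refine lie_of_of_mem_TU1 K ?_ 0 1
    push_cast
    linear_combination (N : K) * CharTwo.two_eq_zero (R := K)
  rw [hTU1] at hmem
  exact hnotMem (hmem I hI fun s hs => hSI (LieSubalgebra.lieSpan_mono hYN (hSY hs)))
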